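/- (Proposition: local Lipschitz continuity of the relaxed value function.) For every t ≥ 0 and every bound b > 0 there exists a constant c > 0 such that for all n×n symmetric positive definite matrices M₁, M₂ with ‖M₁‖_F ≤ b and ‖M₂‖_F ≤ b, one has |U^o_t(M₁) − U^o_t(M₂)| ≤ c · ‖M₁ − M₂‖_F. -/

import Mathlib

open Matrix Finset

/-- The Frobenius norm of a real matrix. -/
noncomputable def frob {n m : ℕ} (M : Matrix (Fin n) (Fin m) ℝ) : ℝ :=
  Real.sqrt (∑ i, ∑ j, (M i j) ^ 2)

/-- `h(A,Q,M) = Aᵀ M A + Q`. -/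
def hfun {n : ℕ} (A Q M : Matrix (Fin n) (Fin n) ℝ) : Matrix (Fin n) (Fin n) ℝ :=
  Aᵀ * M * A + Q

/-- The probability simplex condition for a relaxed schedule. -/
def isRelaxedSchedule {N : ℕ} (θ : ℕ → Fin N → ℝ) : Prop :=
  ∀ k, (∀ i, 0 ≤ θ k i) ∧ ∑ i, θ k i = 1

/-- The cost of a relaxed schedule `θ` over horizon `{0,…,t}` with terminal condition
`K_{t+1} = K`, where `K_{k|k+1} = (K_{k+1}⁻¹ + ∑_i θ_k^i V_k(i))⁻¹` and
`K_k = h(A_k,Q_k,K_{k|k+1})`.  Here `W k` denotes `W̄_{k−1}`. -/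
noncomputable def relaxCost {n N : ℕ}
    (A Q W : ℕ → Matrix (Fin n) (Fin n) ℝ)
    (V : ℕ → Fin N → Matrix (Fin n) (Fin n) ℝ)
    (θ : ℕ → Fin N → ℝ) : ℕ → Matrix (Fin n) (Fin n) ℝ → ℝ
  | 0, K => (((K⁻¹ + ∑ i, θ 0 i • V 0 i)⁻¹) * W 0).trace
  | (t + 1), K =>
      (((K⁻¹ + ∑ i, θ (t + 1) i • V (t + 1) i)⁻¹) * W (t + 1)).trace +
        relaxCost A Q W V θ t
          (hfun (A (t + 1)) (Q (t + 1)) ((K⁻¹ + ∑ i, θ (t + 1) i • V (t + 1) i)⁻¹))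

/-- The relaxed value function `U^o_t(K)`. -/
noncomputable def valueUo {n N : ℕ}
    (A Q W : ℕ → Matrix (Fin n) (Fin n) ℝ)
    (V : ℕ → Fin N → Matrix (Fin n) (Fin n) ℝ)
    (t : ℕ) (K : Matrix (Fin n) (Fin n) ℝ) : ℝ :=
  ⨅ θ : {θ : ℕ → Fin N → ℝ // isRelaxedSchedule θ}, relaxCost A Q W V θ.1 t K

/-!
For a fixed schedule the cost is built from three kinds of maps: the resolvents
`K ↦ (K⁻¹ + S)⁻¹` with `S ⪰ 0`, the congruences `M ↦ AᵀMA + Q`, and the functionals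
`X ↦ tr (X W)`. A resolvent lies below `K` in the Loewner order, so it does not increase the
Frobenius norm, and `(K₁⁻¹ + S)⁻¹ - (K₂⁻¹ + S)⁻¹ = (1 - G₁ S) (K₁ - K₂) (1 - S G₂)` with
`Gᵢ = (Kᵢ⁻¹ + S)⁻¹`. Hence on a Frobenius ball every step is Lipschitz, with a constant depending
only on the radius and on `‖S‖ ≤ ∑ i, ‖V i‖`, i.e. not on the schedule. An infimum of uniformly
Lipschitz functions is Lipschitz with the same constant.
-/

attribute [local instance] Matrix.frobeniusNormedAddCommGroup Matrix.frobeniusNormSMulClass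

namespace Matrix

section Frobenius

variable {κ ι : Type*} [Fintype κ] [Fintype ι]

lemma frobenius_norm_sq {α : Type*} [NormedAddCommGroup α] (M : Matrix κ ι α) :
    ‖M‖ ^ 2 = ∑ i, ∑ j, ‖M i j‖ ^ 2 := by
  change ‖WithLp.toLp 2 fun i => WithLp.toLp 2 fun j => M i j‖ ^ 2 = _
  simp [PiLp.norm_sq_eq_of_L2]

lemma norm_entry_le_frobenius_norm {α : Type*} [NormedAddCommGroup α] (M : Matrix κ ι α)
    (i : κ) (j : ι) : ‖M i j‖ ≤ ‖M‖ :=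
  (PiLp.norm_apply_le (WithLp.toLp 2 fun j => M i j) j).trans
    (PiLp.norm_apply_le (WithLp.toLp 2 fun i => WithLp.toLp 2 fun j => M i j) i)

lemma abs_trace_le_card_mul_norm (M : Matrix ι ι ℝ) : |M.trace| ≤ Fintype.card ι * ‖M‖ :=
  calc |M.trace| ≤ ∑ i, |M i i| := Finset.abs_sum_le_sum_abs _ _
    _ ≤ ∑ _i : ι, ‖M‖ := Finset.sum_le_sum fun i _ => norm_entry_le_frobenius_norm M i i
    _ = Fintype.card ι * ‖M‖ := by simp

lemma abs_trace_mul_sub_trace_mul_le (X Y W : Matrix ι ι ℝ) :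
    |(X * W).trace - (Y * W).trace| ≤ Fintype.card ι * ‖W‖ * ‖X - Y‖ :=
  calc |(X * W).trace - (Y * W).trace| = |((X - Y) * W).trace| := by
        rw [Matrix.sub_mul, trace_sub]
    _ ≤ Fintype.card ι * ‖(X - Y) * W‖ := abs_trace_le_card_mul_norm _
    _ ≤ Fintype.card ι * (‖X - Y‖ * ‖W‖) := by gcongr; exact frobenius_norm_mul _ _
    _ = Fintype.card ι * ‖W‖ * ‖X - Y‖ := by ring

lemma norm_transpose_mul_mul_le (A M : Matrix ι ι ℝ) : ‖Aᵀ * M * A‖ ≤ ‖A‖ ^ 2 * ‖M‖ :=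
  calc ‖Aᵀ * M * A‖ ≤ ‖Aᵀ‖ * ‖M‖ * ‖A‖ :=
        (frobenius_norm_mul _ _).trans (by gcongr; exact frobenius_norm_mul _ _)
    _ = ‖A‖ ^ 2 * ‖M‖ := by rw [frobenius_norm_transpose]; ring

lemma trace_mul_conjTranspose_self (M : Matrix ι ι ℝ) : (M * Mᴴ).trace = ‖M‖ ^ 2 := by
  simp only [frobenius_norm_sq, Real.norm_eq_abs, sq_abs]
  simp [trace, mul_apply, sq]

end Frobenius

section Loewner

variable {ι : Type*} [Fintype ι] [DecidableEq ι]

open scoped MatrixOrder in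
lemma PosSemidef.trace_mul_nonneg {X Y : Matrix ι ι ℝ} (hX : X.PosSemidef)
    (hY : Y.PosSemidef) : 0 ≤ (X * Y).trace := by
  obtain ⟨B, rfl⟩ := CStarAlgebra.nonneg_iff_eq_star_mul_self.mp hY.nonneg
  rw [← Matrix.mul_assoc, trace_mul_comm, ← Matrix.mul_assoc]
  exact (hX.mul_mul_conjTranspose_same B).trace_nonneg

lemma PosSemidef.frobenius_norm_le_of_sub {X Y : Matrix ι ι ℝ} (hX : X.PosSemidef)
    (hYX : (Y - X).PosSemidef) : ‖X‖ ≤ ‖Y‖ := by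
  have hY : Y.PosSemidef := by simpa using hX.add hYX
  have h₁ := hX.trace_mul_nonneg hYX
  have h₂ := hYX.trace_mul_nonneg hY
  rw [Matrix.mul_sub, trace_sub, sub_nonneg] at h₁
  rw [Matrix.sub_mul, trace_sub, sub_nonneg] at h₂
  have hsq : ‖X‖ ^ 2 ≤ ‖Y‖ ^ 2 := by
    rw [← trace_mul_conjTranspose_self, ← trace_mul_conjTranspose_self, hX.isHermitian.eq,
      hY.isHermitian.eq]
    exact h₁.trans h₂
  exact pow_le_pow_iff_left₀ (norm_nonneg _) (norm_nonneg _) two_ne_zero |>.mp hsq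

end Loewner

section Resolvent

variable {ι : Type*} [Fintype ι] [DecidableEq ι] {K K₁ K₂ S : Matrix ι ι ℝ}

lemma PosDef.inv_inv_add (hK : K.PosDef) (hS : S.PosSemidef) : ((K⁻¹ + S)⁻¹).PosDef :=
  (hK.inv.add_posSemidef hS).inv

lemma PosDef.sub_inv_inv_add (hK : K.PosDef) (hS : S.PosSemidef) :
    K - (K⁻¹ + S)⁻¹ = (K⁻¹ + S)⁻¹ * (S + S * K * S) * (K⁻¹ + S)⁻¹ := by
  set P := K⁻¹ + S with hP_def
  have hK_det : IsUnit K.det := hK.det_pos.ne'.isUnit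
  have hP_det : IsUnit P.det := (hK.inv.add_posSemidef hS).det_pos.ne'.isUnit
  have hSKS : S + S * K * S = S * K * P := by
    rw [hP_def, Matrix.mul_add, Matrix.mul_assoc S K K⁻¹, mul_nonsing_inv K hK_det, mul_one]
  have hS_eq : S = P - K⁻¹ := by rw [hP_def, add_sub_cancel_left]
  calc K - P⁻¹ = P⁻¹ * (P - K⁻¹) * K := by
        rw [Matrix.mul_sub, Matrix.sub_mul, nonsing_inv_mul P hP_det, one_mul,
          nonsing_inv_mul_cancel_right K _ hK_det]
    _ = P⁻¹ * (S * K * P) * P⁻¹ := by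
        rw [← hS_eq, ← Matrix.mul_assoc P⁻¹, mul_nonsing_inv_cancel_right P _ hP_det,
          Matrix.mul_assoc]
    _ = P⁻¹ * (S + S * K * S) * P⁻¹ := by rw [hSKS]

lemma PosDef.sub_inv_inv_add_posSemidef (hK : K.PosDef) (hS : S.PosSemidef) :
    (K - (K⁻¹ + S)⁻¹).PosSemidef := by
  have hSKS := hK.posSemidef.conjTranspose_mul_mul_same S
  rw [hS.isHermitian.eq] at hSKS
  have hgap := (hS.add hSKS).conjTranspose_mul_mul_same (K⁻¹ + S)⁻¹
  rwa [(hK.inv_inv_add hS).isHermitian.eq, ← hK.sub_inv_inv_add hS] at hgap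

lemma PosDef.norm_inv_inv_add_le (hK : K.PosDef) (hS : S.PosSemidef) :
    ‖(K⁻¹ + S)⁻¹‖ ≤ ‖K‖ :=
  (hK.inv_inv_add hS).posSemidef.frobenius_norm_le_of_sub (hK.sub_inv_inv_add_posSemidef hS)

lemma PosDef.inv_inv_add_sub_inv_inv_add (hK₁ : K₁.PosDef) (hK₂ : K₂.PosDef)
    (hS : S.PosSemidef) :
    (K₁⁻¹ + S)⁻¹ - (K₂⁻¹ + S)⁻¹ =
      (1 - (K₁⁻¹ + S)⁻¹ * S) * (K₁ - K₂) * (1 - S * (K₂⁻¹ + S)⁻¹) := by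
  set P₁ := K₁⁻¹ + S with hP₁_def
  set P₂ := K₂⁻¹ + S with hP₂_def
  have hK₁_det : IsUnit K₁.det := hK₁.det_pos.ne'.isUnit
  have hK₂_det : IsUnit K₂.det := hK₂.det_pos.ne'.isUnit
  have hP₁_det : IsUnit P₁.det := (hK₁.inv.add_posSemidef hS).det_pos.ne'.isUnit
  have hP₂_det : IsUnit P₂.det := (hK₂.inv.add_posSemidef hS).det_pos.ne'.isUnit
  have h₁ : 1 - P₁⁻¹ * S = P₁⁻¹ * K₁⁻¹ := by
    rw [← nonsing_inv_mul P₁ hP₁_det, hP₁_def, Matrix.mul_add, add_sub_cancel_right]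
  have h₂ : 1 - S * P₂⁻¹ = K₂⁻¹ * P₂⁻¹ := by
    rw [← mul_nonsing_inv P₂ hP₂_det, hP₂_def, Matrix.add_mul, add_sub_cancel_right]
  have hK_gap : K₁⁻¹ * (K₁ - K₂) * K₂⁻¹ = P₂ - P₁ := by
    rw [Matrix.mul_sub, Matrix.sub_mul, nonsing_inv_mul K₁ hK₁_det, one_mul,
      mul_nonsing_inv_cancel_right K₂ _ hK₂_det, hP₁_def, hP₂_def, add_sub_add_right_eq_sub]
  rw [h₁, h₂]
  calc P₁⁻¹ - P₂⁻¹ = P₁⁻¹ * (P₂ - P₁) * P₂⁻¹ := by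
        rw [Matrix.mul_sub, Matrix.sub_mul, nonsing_inv_mul P₁ hP₁_det, one_mul,
          mul_nonsing_inv_cancel_right P₂ _ hP₂_det]
    _ = P₁⁻¹ * (K₁⁻¹ * (K₁ - K₂) * K₂⁻¹) * P₂⁻¹ := by rw [hK_gap]
    _ = P₁⁻¹ * K₁⁻¹ * (K₁ - K₂) * (K₂⁻¹ * P₂⁻¹) := by simp only [Matrix.mul_assoc]

lemma PosDef.norm_inv_inv_add_sub_le (hK₁ : K₁.PosDef) (hK₂ : K₂.PosDef) (hS : S.PosSemidef)
    {b s : ℝ} (hb₁ : ‖K₁‖ ≤ b) (hb₂ : ‖K₂‖ ≤ b) (hs : ‖S‖ ≤ s) :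
    ‖(K₁⁻¹ + S)⁻¹ - (K₂⁻¹ + S)⁻¹‖ ≤ (‖(1 : Matrix ι ι ℝ)‖ + b * s) ^ 2 * ‖K₁ - K₂‖ := by
  have hG₁ : ‖(K₁⁻¹ + S)⁻¹‖ ≤ b := (hK₁.norm_inv_inv_add_le hS).trans hb₁
  have hG₂ : ‖(K₂⁻¹ + S)⁻¹‖ ≤ b := (hK₂.norm_inv_inv_add_le hS).trans hb₂
  have hs₀ : 0 ≤ s := (norm_nonneg _).trans hs
  have hb₀ : 0 ≤ b := (norm_nonneg _).trans hb₁
  have hL₁ : ‖1 - (K₁⁻¹ + S)⁻¹ * S‖ ≤ ‖(1 : Matrix ι ι ℝ)‖ + b * s :=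
    calc _ ≤ ‖(1 : Matrix ι ι ℝ)‖ + ‖(K₁⁻¹ + S)⁻¹‖ * ‖S‖ :=
          (norm_sub_le _ _).trans (by gcongr; exact frobenius_norm_mul _ _)
      _ ≤ _ := by gcongr
  have hL₂ : ‖1 - S * (K₂⁻¹ + S)⁻¹‖ ≤ ‖(1 : Matrix ι ι ℝ)‖ + b * s :=
    calc _ ≤ ‖(1 : Matrix ι ι ℝ)‖ + ‖(K₂⁻¹ + S)⁻¹‖ * ‖S‖ :=
          (norm_sub_le _ _).trans (by rw [mul_comm ‖_‖]; gcongr; exact frobenius_norm_mul _ _)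
      _ ≤ _ := by gcongr
  rw [hK₁.inv_inv_add_sub_inv_inv_add hK₂ hS]
  calc _ ≤ ‖1 - (K₁⁻¹ + S)⁻¹ * S‖ * ‖K₁ - K₂‖ * ‖1 - S * (K₂⁻¹ + S)⁻¹‖ :=
        (frobenius_norm_mul _ _).trans (by gcongr; exact frobenius_norm_mul _ _)
    _ ≤ (‖(1 : Matrix ι ι ℝ)‖ + b * s) * ‖K₁ - K₂‖ * (‖(1 : Matrix ι ι ℝ)‖ + b * s) := by
        gcongr
    _ = _ := by ring

end Resolvent

end Matrix

lemma frob_eq_norm {n m : ℕ} (M : Matrix (Fin n) (Fin m) ℝ) : frob M = ‖M‖ := by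
  rw [frob, ← Real.sqrt_sq (norm_nonneg M), Matrix.frobenius_norm_sq]
  simp

namespace Real

variable {ι : Type*} {f g : ι → ℝ} {δ : ℝ}

/-- This also holds for the junk value `0` of an empty or unbounded infimum, because `f` is
bounded below exactly when `g` is. -/
lemma iInf_le_iInf_add_of_abs_sub_le (hδ : 0 ≤ δ) (h : ∀ i, |f i - g i| ≤ δ) :
    ⨅ i, f i ≤ (⨅ i, g i) + δ := by
  have hfg : ∀ i, f i ≤ g i + δ := fun i => by linarith [(abs_sub_le_iff.mp (h i)).1]
  have hgf : ∀ i, g i - δ ≤ f i := fun i => by linarith [(abs_sub_le_iff.mp (h i)).2]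
  cases isEmpty_or_nonempty ι
  · simpa using hδ
  by_cases hg : BddBelow (Set.range g)
  · obtain ⟨m, hm⟩ := hg
    have hf : BddBelow (Set.range f) :=
      ⟨m - δ, Set.forall_mem_range.mpr fun i => by linarith [hm ⟨i, rfl⟩, hgf i]⟩
    have : (⨅ i, f i) - δ ≤ ⨅ i, g i := le_ciInf fun i => by linarith [ciInf_le hf i, hfg i]
    linarith
  · have hf : ¬BddBelow (Set.range f) := fun ⟨m, hm⟩ =>
      hg ⟨m - δ, Set.forall_mem_range.mpr fun i => by linarith [hm ⟨i, rfl⟩, hfg i]⟩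
    rw [iInf_of_not_bddBelow hf, iInf_of_not_bddBelow hg]
    linarith

lemma abs_iInf_sub_iInf_le (hδ : 0 ≤ δ) (h : ∀ i, |f i - g i| ≤ δ) :
    |(⨅ i, f i) - ⨅ i, g i| ≤ δ := by
  rw [abs_sub_le_iff]
  constructor
  · linarith [iInf_le_iInf_add_of_abs_sub_le hδ h]
  · linarith [iInf_le_iInf_add_of_abs_sub_le hδ fun i => (abs_sub_comm (g i) (f i)).trans_le (h i)]

end Real

namespace isRelaxedSchedule

variable {ι : Type*} {N : ℕ} {θ : ℕ → Fin N → ℝ}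

lemma posSemidef_sum_smul (hθ : isRelaxedSchedule θ) {V : Fin N → Matrix ι ι ℝ}
    (hV : ∀ i, (V i).PosSemidef) (k : ℕ) : (∑ i, θ k i • V i).PosSemidef :=
  posSemidef_sum _ fun i _ => (hV i).smul ((hθ k).1 i)

lemma norm_sum_smul_le [Fintype ι] (hθ : isRelaxedSchedule θ) (V : Fin N → Matrix ι ι ℝ)
    (k : ℕ) : ‖∑ i, θ k i • V i‖ ≤ ∑ i, ‖V i‖ := by
  refine (norm_sum_le _ _).trans (Finset.sum_le_sum fun i _ => ?_)
  have hθ_le : θ k i ≤ 1 := (hθ k).2 ▸ single_le_sum (fun j _ => (hθ k).1 j) (mem_univ i)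
  rw [norm_smul, Real.norm_of_nonneg ((hθ k).1 i)]
  exact mul_le_of_le_one_left (norm_nonneg _) hθ_le

end isRelaxedSchedule

section hfun

variable {n : ℕ}

lemma hfun_posDef (A : Matrix (Fin n) (Fin n) ℝ) {Q M : Matrix (Fin n) (Fin n) ℝ}
    (hQ : Q.PosDef) (hM : M.PosSemidef) : (hfun A Q M).PosDef := by
  simpa [hfun] using PosDef.posSemidef_add (hM.conjTranspose_mul_mul_same A) hQ

lemma norm_hfun_le (A Q M : Matrix (Fin n) (Fin n) ℝ) :
    ‖hfun A Q M‖ ≤ ‖A‖ ^ 2 * ‖M‖ + ‖Q‖ :=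
  (norm_add_le _ _).trans (by gcongr; exact norm_transpose_mul_mul_le A M)

lemma norm_hfun_sub_hfun_le (A Q M₁ M₂ : Matrix (Fin n) (Fin n) ℝ) :
    ‖hfun A Q M₁ - hfun A Q M₂‖ ≤ ‖A‖ ^ 2 * ‖M₁ - M₂‖ := by
  have h : hfun A Q M₁ - hfun A Q M₂ = Aᵀ * (M₁ - M₂) * A := by
    simp only [hfun, Matrix.mul_sub, Matrix.sub_mul, add_sub_add_right_eq_sub]
  rw [h]
  exact norm_transpose_mul_mul_le A _

end hfun

section relaxCost

variable {n N : ℕ} (A Q W : ℕ → Matrix (Fin n) (Fin n) ℝ)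
  (V : ℕ → Fin N → Matrix (Fin n) (Fin n) ℝ)

lemma exists_lipschitz_relaxCost (hQ : ∀ k, (Q k).PosDef) (hV : ∀ k i, (V k i).PosSemidef)
    (t : ℕ) (b : ℝ) :
    ∃ c, 0 ≤ c ∧ ∀ θ, isRelaxedSchedule θ → ∀ K₁ K₂ : Matrix (Fin n) (Fin n) ℝ,
      K₁.PosDef → K₂.PosDef → ‖K₁‖ ≤ b → ‖K₂‖ ≤ b →
      |relaxCost A Q W V θ t K₁ - relaxCost A Q W V θ t K₂| ≤ c * ‖K₁ - K₂‖ := by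
  induction t generalizing b with
  | zero =>
    set L := (‖(1 : Matrix (Fin n) (Fin n) ℝ)‖ + b * ∑ i, ‖V 0 i‖) ^ 2
    refine ⟨n * ‖W 0‖ * L, by positivity, fun θ hθ K₁ K₂ hK₁ hK₂ hb₁ hb₂ => ?_⟩
    rw [relaxCost, relaxCost]
    set S := ∑ i, θ 0 i • V 0 i
    have hS : S.PosSemidef := hθ.posSemidef_sum_smul (hV 0) 0
    have hG := hK₁.norm_inv_inv_add_sub_le hK₂ hS hb₁ hb₂ (hθ.norm_sum_smul_le (V 0) 0)
    calc _ ≤ n * ‖W 0‖ * ‖(K₁⁻¹ + S)⁻¹ - (K₂⁻¹ + S)⁻¹‖ := by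
          simpa using abs_trace_mul_sub_trace_mul_le _ _ (W 0)
      _ ≤ n * ‖W 0‖ * (L * ‖K₁ - K₂‖) := by gcongr
      _ = _ := by ring
  | succ t ih =>
    set L := (‖(1 : Matrix (Fin n) (Fin n) ℝ)‖ + b * ∑ i, ‖V (t + 1) i‖) ^ 2
    obtain ⟨c, hc, hcost⟩ := ih (‖A (t + 1)‖ ^ 2 * b + ‖Q (t + 1)‖)
    refine ⟨(n * ‖W (t + 1)‖ + c * ‖A (t + 1)‖ ^ 2) * L, by positivity,
      fun θ hθ K₁ K₂ hK₁ hK₂ hb₁ hb₂ => ?_⟩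
    rw [relaxCost, relaxCost, add_sub_add_comm]
    set S := ∑ i, θ (t + 1) i • V (t + 1) i
    have hS : S.PosSemidef := hθ.posSemidef_sum_smul (hV (t + 1)) (t + 1)
    have hG := hK₁.norm_inv_inv_add_sub_le hK₂ hS hb₁ hb₂ (hθ.norm_sum_smul_le (V (t + 1)) _)
    have hnext (K : Matrix (Fin n) (Fin n) ℝ) (hK : K.PosDef) (hb : ‖K‖ ≤ b) :
        (hfun (A (t + 1)) (Q (t + 1)) (K⁻¹ + S)⁻¹).PosDef ∧
          ‖hfun (A (t + 1)) (Q (t + 1)) (K⁻¹ + S)⁻¹‖ ≤ ‖A (t + 1)‖ ^ 2 * b + ‖Q (t + 1)‖ :=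
      ⟨hfun_posDef _ (hQ _) (hK.inv_inv_add hS).posSemidef,
        (norm_hfun_le _ _ _).trans (by gcongr; exact (hK.norm_inv_inv_add_le hS).trans hb)⟩
    obtain ⟨hK₁', hb₁'⟩ := hnext K₁ hK₁ hb₁
    obtain ⟨hK₂', hb₂'⟩ := hnext K₂ hK₂ hb₂
    have htrace := abs_trace_mul_sub_trace_mul_le (K₁⁻¹ + S)⁻¹ (K₂⁻¹ + S)⁻¹ (W (t + 1))
    have htail := hcost θ hθ _ _ hK₁' hK₂' hb₁' hb₂'
    have hstate := norm_hfun_sub_hfun_le (A (t + 1)) (Q (t + 1)) (K₁⁻¹ + S)⁻¹ (K₂⁻¹ + S)⁻¹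
    rw [Fintype.card_fin] at htrace
    calc _ ≤ _ := abs_add_le _ _
      _ ≤ n * ‖W (t + 1)‖ * (L * ‖K₁ - K₂‖) + c * (‖A (t + 1)‖ ^ 2 * (L * ‖K₁ - K₂‖)) := by
          gcongr
          · exact htrace.trans (by gcongr)
          · exact htail.trans (by gcongr; exact hstate.trans (by gcongr))
      _ = _ := by ring

end relaxCost

theorem valueUo_locally_lipschitz_general {n N : ℕ}
    (A Q W : ℕ → Matrix (Fin n) (Fin n) ℝ)
    (V : ℕ → Fin N → Matrix (Fin n) (Fin n) ℝ)
    (hQ : ∀ k, (Q k).PosDef) (hV : ∀ k i, (V k i).PosSemidef) :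
    ∀ t : ℕ, ∀ b : ℝ, 0 < b → ∃ c : ℝ, 0 < c ∧
      ∀ M₁ M₂ : Matrix (Fin n) (Fin n) ℝ, M₁.PosDef → M₂.PosDef →
        frob M₁ ≤ b → frob M₂ ≤ b →
        |valueUo A Q W V t M₁ - valueUo A Q W V t M₂| ≤ c * frob (M₁ - M₂) := by
  intro t b _
  obtain ⟨c, hc, hcost⟩ := exists_lipschitz_relaxCost A Q W V hQ hV t b
  refine ⟨c + 1, by positivity, fun M₁ M₂ h₁ h₂ hb₁ hb₂ => ?_⟩
  rw [frob_eq_norm] at hb₁ hb₂ ⊢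
  calc |valueUo A Q W V t M₁ - valueUo A Q W V t M₂| ≤ c * ‖M₁ - M₂‖ :=
        Real.abs_iInf_sub_iInf_le (by positivity) fun θ => hcost θ.1 θ.2 M₁ M₂ h₁ h₂ hb₁ hb₂
    _ ≤ (c + 1) * ‖M₁ - M₂‖ := by gcongr; linarith

/-- local Lipschitz continuity of the relaxed value function.  For every
`t` and every bound `b > 0` there exists `c > 0` such that for all positive definite
`M₁, M₂` with Frobenius norm at most `b`,
`|U^o_t(M₁) − U^o_t(M₂)| ≤ c ‖M₁ − M₂‖_F`. -/
theorem valueUo_locally_lipschitz {n N : ℕ} [NeZero N]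
    (A Q W : ℕ → Matrix (Fin n) (Fin n) ℝ)
    (V : ℕ → Fin N → Matrix (Fin n) (Fin n) ℝ)
    (hQ : ∀ k, (Q k).PosDef) (hV : ∀ k i, (V k i).PosSemidef)
    (hW : ∀ k, (W k).PosSemidef) :
    ∀ t : ℕ, ∀ b : ℝ, 0 < b → ∃ c : ℝ, 0 < c ∧
      ∀ M₁ M₂ : Matrix (Fin n) (Fin n) ℝ, M₁.PosDef → M₂.PosDef →
        frob M₁ ≤ b → frob M₂ ≤ b →
        |valueUo A Q W V t M₁ - valueUo A Q W V t M₂| ≤ c * frob (M₁ - M₂) :=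
  valueUo_locally_lipschitz_general A Q W V hQ hV
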